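/- arXiv:2510.23365 — 2 statements merged into one kernel-verified Lean document; each statement's English description precedes it below -/
import Mathlib

section
/- Let X be a proper geodesic CAT(−1) space, γ : ℝ → X a geodesic, x ∈ X, and t ∈ ℝ with γ(t) = π_γ(x). Then for every s ∈ ℝ, |d(x, γ(s)) − (d(x, γ(t)) + |t − s|)| < 1.3. -/
/-!
Core definitions: proper geodesic CAT(−1) spaces, geodesic segments,
nearest-point projections, horofunction (= Gromov) boundary.
-/

noncomputable section

open Real Set Metric Filter Topology
open scoped ENNReal NNReal

/-- Inverse hyperbolic cosine. -/
def arcosh (x : ℝ) : ℝ := Real.log (x + Real.sqrt (x ^ 2 - 1))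

/-- Cosine of the angle, at the common vertex, of the ℍ²-comparison triangle whose two
sides adjacent to this vertex have lengths `a`, `b` and whose opposite side has length `c`
(hyperbolic law of cosines). -/
def cmpCos (a b c : ℝ) : ℝ :=
  (Real.cosh a * Real.cosh b - Real.cosh c) / (Real.sinh a * Real.sinh b)

/-- The distance, in the ℍ²-comparison triangle with side lengths `a`, `b` adjacent to the
common vertex and opposite side length `c`, between the comparison points at arclength
parameters `s` (on the side of length `a`) and `t` (on the side of length `b`). -/
def cmpDist (a b c s t : ℝ) : ℝ :=
  _root_.arcosh (Real.cosh s * Real.cosh t - Real.sinh s * Real.sinh t * cmpCos a b c)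

/-- A choice of geodesics in a metric space: `geo x y` is an arclength parametrization on
`[0, dist x y]` of a geodesic from `x` to `y`.  A metric space admitting such a structure
is a geodesic space. -/
structure GeodesicStructure (X : Type*) [MetricSpace X] where
  geo : X → X → ℝ → X
  geo_zero : ∀ x y, geo x y 0 = x
  geo_end : ∀ x y, geo x y (dist x y) = y
  geo_isom : ∀ x y, ∀ s ∈ Set.Icc (0 : ℝ) (dist x y), ∀ t ∈ Set.Icc (0 : ℝ) (dist x y),
    dist (geo x y s) (geo x y t) = |s - t|

/-- The geodesic segment `[x, y]`. -/
def GeodesicStructure.seg {X : Type*} [MetricSpace X] (G : GeodesicStructure X) (x y : X) :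
    Set X :=
  G.geo x y '' Set.Icc 0 (dist x y)

/-- The CAT(−1) comparison property: every geodesic triangle is at least as thin as its
comparison triangle in the hyperbolic plane ℍ². -/
def GeodesicStructure.IsCATNegOne {X : Type*} [MetricSpace X] (G : GeodesicStructure X) :
    Prop :=
  ∀ x y z : X, ∀ s ∈ Set.Icc (0 : ℝ) (dist x y), ∀ t ∈ Set.Icc (0 : ℝ) (dist x z),
    dist (G.geo x y s) (G.geo x z t) ≤ cmpDist (dist x y) (dist x z) (dist y z) s t

/-- `p` is a nearest point to `x` in the set `s` (a nearest-point projection of `x`). -/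
def IsNearestPt {X : Type*} [MetricSpace X] (s : Set X) (x p : X) : Prop :=
  p ∈ s ∧ ∀ q ∈ s, dist x p ≤ dist x q

/-- A (possibly noncompact) geodesic subset of `X`: the isometric image of an interval. -/
def IsGeodesicSet {X : Type*} [MetricSpace X] (γ : Set X) : Prop :=
  ∃ (I : Set ℝ) (f : ℝ → X), I.OrdConnected ∧
    (∀ s ∈ I, ∀ t ∈ I, dist (f s) (f t) = |s - t|) ∧ γ = f '' I

/-- A bi-infinite geodesic parametrized by arclength. -/
def IsGeodesicLine {X : Type*} [MetricSpace X] (γ : ℝ → X) : Prop :=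
  ∀ s t : ℝ, dist (γ s) (γ t) = |s - t|

/-- The set of nearest-point projections to `γ` of points of `S`. -/
def projSet {X : Type*} [MetricSpace X] (γ : Set X) (S : Set X) : Set X :=
  {p | ∃ w ∈ S, IsNearestPt γ w p}

/-- The horofunction embedding `z ↦ d(·, z) − d(x₀, z)` based at `x₀`. -/
def horoemb {X : Type*} [MetricSpace X] (x0 : X) (z : X) : X → ℝ :=
  fun x => dist x z - dist x0 z

/-- The horofunction boundary of `X` (based at `x₀`), which for a proper geodesic
CAT(−1) space coincides with the Gromov boundary `∂X`:  the set of limits, in the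
topology of pointwise convergence, of functions `d(·, zₙ) − d(x₀, zₙ)` with `zₙ → ∞`. -/
def horoBdry {X : Type*} [MetricSpace X] (x0 : X) : Set (X → ℝ) :=
  closure (Set.range (horoemb x0)) \ Set.range (horoemb x0)

/-- `(w, [x,y])` is `K`-aligned: the nearest-point projection of `w` to `[x,y]` is at
distance less than `K` from `x`. -/
def AlignedLeft {X : Type*} [MetricSpace X] (G : GeodesicStructure X) (w x y : X)
    (K : ℝ) : Prop :=
  ∃ p, IsNearestPt (G.seg x y) w p ∧ dist p x < K

/-- `([x,y], z)` is `K`-aligned, i.e. `(z, [y,x])` is `K`-aligned. -/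
def AlignedRight {X : Type*} [MetricSpace X] (G : GeodesicStructure X) (x y z : X)
    (K : ℝ) : Prop :=
  ∃ q, IsNearestPt (G.seg x y) z q ∧ dist q y < K

/-- `(w, [x,y], z)` is `K`-aligned. -/
def AlignedTriple {X : Type*} [MetricSpace X] (G : GeodesicStructure X) (w x y z : X)
    (K : ℝ) : Prop :=
  AlignedLeft G w x y K ∧ AlignedRight G x y z K

/-! If `γ t` is the projection of `x`, the comparison angle at `γ t` between `x` and any `γ s` is
not acute: otherwise the CAT(−1) inequality would give points of `[γ t, γ s] ⊆ γ` closer to `x`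
than `γ t`.  With `a = d(x, γ t)`, `b = |t − s|`, `c = d(x, γ s)` this is the hyperbolic
Pythagorean inequality `cosh a cosh b ≤ cosh c`, which forces `e^(a+b) ≤ 2 e^c`, i.e.
`a + b − c ≤ log 2 < 1.3`; the other side is the triangle inequality. -/

theorem arcosh_eq_real_arcosh : _root_.arcosh = Real.arcosh := rfl

theorem cmpDist_sub_self_eq_zero {a b : ℝ} (hb : 0 ≤ b) (hba : b ≤ a) :
    cmpDist a b (a - b) b b = 0 := by
  rcases hb.eq_or_lt with rfl | hb
  · simp [cmpDist, arcosh_eq_real_arcosh]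
  have hcos : cmpCos a b (a - b) = 1 := by
    have : 0 < sinh a * sinh b := mul_pos (sinh_pos_iff.2 (hb.trans_le hba)) (sinh_pos_iff.2 hb)
    rw [cmpCos, cosh_sub, sub_sub_cancel, div_self this.ne']
  have hone : cosh b * cosh b - sinh b * sinh b * 1 = 1 := by
    linear_combination cosh_sq_sub_sinh_sq b
  rw [cmpDist, hcos, hone, arcosh_eq_real_arcosh, Real.arcosh_zero]

theorem cmpCos_le_one {a b c : ℝ} (ha : 0 < a) (hb : 0 < b) (h : |a - b| ≤ c) :
    cmpCos a b c ≤ 1 := by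
  have hc : cosh (a - b) ≤ cosh c := cosh_le_cosh.2 (h.trans (le_abs_self c))
  rw [cmpCos, div_le_one (mul_pos (sinh_pos_iff.2 ha) (sinh_pos_iff.2 hb))]
  rw [cosh_sub] at hc
  linarith

theorem cosh_sub_one_le_mul_sinh {x : ℝ} (hx : 0 ≤ x) : cosh x - 1 ≤ x * sinh x := by
  rw [cosh_eq, sinh_eq]
  have hinv : exp x * exp (-x) = 1 := by rw [← exp_add, add_neg_cancel, exp_zero]
  have hneg : 1 - x ≤ exp (-x) := by linarith [add_one_le_exp (-x)]
  have hpos : 1 + x ≤ exp x := by linarith [add_one_le_exp x]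
  have h1 : exp x * (1 - x) ≤ 1 + x := by
    nlinarith [mul_le_mul_of_nonneg_left hneg (exp_pos x).le]
  have h2 : 0 ≤ x * (exp x + 1) - (exp x - 1) := by nlinarith
  nlinarith [mul_nonneg (by linarith : 0 ≤ exp x - 1) h2]

/-- `ε` is chosen so that the first-order decrease `ε sinh a cmpCos a b c` of the comparison
distance beats its second-order increase `cosh a (cosh ε - 1) ≤ ε sinh ε cosh a`. -/
theorem exists_mem_Ioc_cmpDist_lt {a b c : ℝ} (ha : 0 < a) (hb : 0 < b)
    (hk0 : 0 < cmpCos a b c) (hk1 : cmpCos a b c ≤ 1) :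
    ∃ ε ∈ Ioc 0 b, cmpDist a b c a ε < a := by
  set k := cmpCos a b c
  have hsa : 0 < sinh a := sinh_pos_iff.2 ha
  have hca : 0 < cosh a := cosh_pos a
  set ε := min b (sinh a * k / (2 * cosh a))
  have hε : 0 < ε := lt_min hb (by positivity)
  have hεk : cosh a * ε < sinh a * k := by
    have h : ε ≤ sinh a * k / (2 * cosh a) := min_le_right _ _
    rw [le_div_iff₀ (by positivity)] at h
    nlinarith [mul_pos hsa hk0]
  have hsε : 0 < sinh ε := sinh_pos_iff.2 hε
  have hlt : cosh a * cosh ε - sinh a * sinh ε * k < cosh a := by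
    nlinarith [mul_lt_mul_of_pos_right hεk hsε,
      mul_le_mul_of_nonneg_left (cosh_sub_one_le_mul_sinh hε.le) hca.le]
  have hpos : 0 < cosh a * cosh ε - sinh a * sinh ε * k := by
    nlinarith [cosh_pos (a - ε), cosh_sub a ε, mul_pos hsa hsε]
  refine ⟨ε, ⟨hε, min_le_left _ _⟩, ?_⟩
  rw [cmpDist, arcosh_eq_real_arcosh]
  calc Real.arcosh _ < Real.arcosh (cosh a) := (Real.arcosh_lt_arcosh hpos hca).2 hlt
    _ = a := Real.arcosh_cosh ha.le

theorem add_sub_le_log_two_of_cosh_mul_cosh_le {a b c : ℝ} (hc : 0 ≤ c)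
    (h : cosh a * cosh b ≤ cosh c) : a + b - c ≤ log 2 := by
  have hexp : exp (a + b) ≤ 2 * exp c := by
    have hab : exp (a + b) ≤ 2 * cosh (a + b) := by
      rw [cosh_eq]; linarith [exp_pos (-(a + b))]
    have hsum : cosh (a + b) + 1 ≤ 2 * (cosh a * cosh b) := by
      linarith [cosh_add a b, cosh_sub a b, one_le_cosh (a - b)]
    have hcosh : 2 * cosh c ≤ exp c + 1 := by
      rw [cosh_eq]; linarith [exp_le_one_iff.2 (neg_nonpos.2 hc)]
    linarith
  rw [le_log_iff_exp_le two_pos, exp_sub]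
  exact (div_le_iff₀ (exp_pos c)).2 hexp

namespace GeodesicStructure.IsCATNegOne

variable {X : Type*} [MetricSpace X] {G : GeodesicStructure X}

/-- The comparison triangle of `y, z, w` is degenerate, so the comparison distance vanishes. -/
theorem geo_dist_eq_of_dist_add_dist_eq (hX : G.IsCATNegOne) {y z w : X}
    (h : dist y w + dist w z = dist y z) : G.geo y z (dist y w) = w := by
  have hwz : dist z w = dist y z - dist y w := by rw [dist_comm z w]; linarith
  have hle : dist y w ≤ dist y z := by linarith [dist_nonneg (x := w) (y := z)]
  have hcmp := hX y z w (dist y w) ⟨dist_nonneg, hle⟩ (dist y w) ⟨dist_nonneg, le_rfl⟩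
  rw [G.geo_end, hwz, cmpDist_sub_self_eq_zero dist_nonneg hle] at hcmp
  exact dist_le_zero.1 hcmp

theorem seg_subset_range (hX : G.IsCATNegOne) {γ : ℝ → X} (hγ : IsGeodesicLine γ)
    (t s : ℝ) : G.seg (γ t) (γ s) ⊆ range γ := by
  rintro _ ⟨ε, ⟨hε0, hεb⟩, rfl⟩
  rw [hγ] at hεb
  suffices ∃ u, |t - u| = ε ∧ |t - u| + |u - s| = |t - s| by
    obtain ⟨u, hu, hsum⟩ := this
    refine ⟨u, ?_⟩
    rw [← hu, ← hγ]
    exact (hX.geo_dist_eq_of_dist_add_dist_eq (by rwa [hγ, hγ, hγ])).symm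
  rcases le_total t s with hts | hst
  · rw [abs_of_nonpos (sub_nonpos.2 hts)] at hεb
    refine ⟨t + ε, ?_, ?_⟩
    · rw [sub_add_cancel_left, abs_neg, abs_of_nonneg hε0]
    · rw [abs_of_nonpos (by linarith : t - (t + ε) ≤ 0),
        abs_of_nonpos (by linarith : t + ε - s ≤ 0), abs_of_nonpos (sub_nonpos.2 hts)]
      ring
  · rw [abs_of_nonneg (sub_nonneg.2 hst)] at hεb
    refine ⟨t - ε, ?_, ?_⟩
    · rw [sub_sub_cancel, abs_of_nonneg hε0]
    · rw [sub_sub_cancel, abs_of_nonneg hε0, abs_of_nonneg (by linarith : 0 ≤ t - ε - s),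
        abs_of_nonneg (sub_nonneg.2 hst)]
      ring

/-- The hypothesis says that the comparison angle at `p` is acute. -/
theorem exists_mem_seg_dist_lt (hX : G.IsCATNegOne) {p x q : X}
    (h : cosh (dist x q) < cosh (dist p x) * cosh (dist p q)) :
    ∃ y ∈ G.seg p q, dist x y < dist x p := by
  have ha : 0 < dist p x := by
    refine dist_pos.2 fun hpx => ?_
    subst hpx
    simp at h
  have hb : 0 < dist p q := by
    refine dist_pos.2 fun hpq => ?_
    subst hpq
    simp [dist_comm] at h
  have hk0 : 0 < cmpCos (dist p x) (dist p q) (dist x q) :=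
    div_pos (sub_pos.2 h) (mul_pos (sinh_pos_iff.2 ha) (sinh_pos_iff.2 hb))
  have hk1 : cmpCos (dist p x) (dist p q) (dist x q) ≤ 1 := by
    refine cmpCos_le_one ha hb ?_
    rw [dist_comm p x, dist_comm p q]
    exact abs_dist_sub_le x q p
  obtain ⟨ε, hε, hlt⟩ := exists_mem_Ioc_cmpDist_lt ha hb hk0 hk1
  have hcmp := hX p x q (dist p x) ⟨dist_nonneg, le_rfl⟩ ε (Ioc_subset_Icc_self hε)
  rw [G.geo_end] at hcmp
  exact ⟨_, mem_image_of_mem _ (Ioc_subset_Icc_self hε), by linarith [dist_comm x p]⟩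

theorem cosh_mul_cosh_le_cosh_of_isNearestPt (hX : G.IsCATNegOne) {S : Set X} {x p q : X}
    (hp : IsNearestPt S x p) (hpq : G.seg p q ⊆ S) :
    cosh (dist x p) * cosh (dist p q) ≤ cosh (dist x q) := by
  by_contra! h
  obtain ⟨y, hy, hxy⟩ :=
    hX.exists_mem_seg_dist_lt (p := p) (x := x) (q := q) (by rwa [dist_comm p x])
  exact hxy.not_ge (hp.2 y (hpq hy))

end GeodesicStructure.IsCATNegOne

theorem dist_along_geodesic_approx_general
    {X : Type*} [MetricSpace X]
    (G : GeodesicStructure X) (hX : G.IsCATNegOne)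
    (γ : ℝ → X) (hγ : IsGeodesicLine γ)
    (x : X) (t : ℝ) (ht : IsNearestPt (Set.range γ) x (γ t)) (s : ℝ) :
    |dist x (γ s) - (dist x (γ t) + |t - s|)| < 1.3 := by
  have hpyth := hX.cosh_mul_cosh_le_cosh_of_isNearestPt ht (hX.seg_subset_range hγ t s)
  have hlow := add_sub_le_log_two_of_cosh_mul_cosh_le dist_nonneg hpyth
  have hup := dist_triangle x (γ t) (γ s)
  rw [hγ] at hlow hup
  have hlog := log_two_lt_d9
  rw [abs_lt]
  constructor <;> norm_num at hlog ⊢ <;> linarith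

/-- **Distance estimate along a geodesic** (Corollary 2.3).  Let `X` be a proper geodesic
CAT(−1) space, `γ : ℝ → X` a geodesic, `x ∈ X` and `t ∈ ℝ` with `γ(t) = π_γ(x)`.  Then
for every `s ∈ ℝ`, `|d(x, γ(s)) − (d(x, γ(t)) + |t − s|)| < 1.3`. -/
theorem dist_along_geodesic_approx
    {X : Type*} [MetricSpace X] [ProperSpace X]
    (G : GeodesicStructure X) (hX : G.IsCATNegOne)
    (γ : ℝ → X) (hγ : IsGeodesicLine γ)
    (x : X) (t : ℝ) (ht : IsNearestPt (Set.range γ) x (γ t)) (s : ℝ) :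
    |dist x (γ s) - (dist x (γ t) + |t - s|)| < 1.3 :=
  dist_along_geodesic_approx_general G hX γ hγ x t ht s

end
end

section
/- Let Z = X₁ × ⋯ × X_r be a product of proper geodesic CAT(−1) spaces and Γ < Isom(Z) a transverse subgroup. Let z = (x₁,…,x_r) ∈ Z. Then for every R > 0 there exists R' = R'(R,z) > 0 such that whenever g = (g₁,…,g_r) and h = (h₁,…,h_r) in Γ satisfy h₁x₁ ∈ O_R(x₁, g₁x₁), one has h_i x_i ∈ O_{R'}(x_i, g_i x_i) for all 1 ≤ i ≤ r. -/
/-!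
Core definitions: proper geodesic CAT(−1) spaces, geodesic segments,
nearest-point projections, horofunction (= Gromov) boundary.
-/

noncomputable section

open Real Set Metric Filter Topology
open scoped ENNReal NNReal

/-! ## Products of CAT(−1) spaces, boundary action, transverse subgroups -/

/-- The natural map on 1-Lipschitz functions induced by an isometry `g`:
`f ↦ f ∘ g⁻¹ − f(g⁻¹ x₀)`, i.e. the renormalized action on horofunctions. -/
def horoMap {Y : Type*} [MetricSpace Y] (x0 : Y) (g : Y ≃ᵢ Y) (f : Y → ℝ) : Y → ℝ :=
  fun x => f (g.symm x) - f (g.symm x0)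

theorem horoMap_horoemb {Y : Type*} [MetricSpace Y] (x0 : Y) (g : Y ≃ᵢ Y) (z : Y) :
    horoMap x0 g (horoemb x0 z) = horoemb x0 (g z) := by
  funext x
  simp only [horoMap, horoemb]
  have h1 : dist (g.symm x) z = dist x (g z) := by
    conv_rhs => rw [← g.apply_symm_apply x]
    rw [g.dist_eq]
  have h2 : dist (g.symm x0) z = dist x0 (g z) := by
    conv_rhs => rw [← g.apply_symm_apply x0]
    rw [g.dist_eq]
  rw [h1, h2]
  ring

theorem horoMap_continuous {Y : Type*} [MetricSpace Y] (x0 : Y) (g : Y ≃ᵢ Y) :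
    Continuous (horoMap x0 g) := by
  apply continuous_pi
  intro x
  exact (continuous_apply (g.symm x)).sub (continuous_apply (g.symm x0))

/-- Isometries preserve the horofunction boundary. -/
theorem horoMap_mem_bdry {Y : Type*} [MetricSpace Y] (x0 : Y) (g : Y ≃ᵢ Y)
    {f : Y → ℝ} (hf : f ∈ horoBdry x0) : horoMap x0 g f ∈ horoBdry x0 := by
  obtain ⟨hf1, hf2⟩ := hf
  constructor
  · have h2 : horoMap x0 g '' closure (Set.range (horoemb x0)) ⊆
        closure (horoMap x0 g '' Set.range (horoemb x0)) :=
      image_closure_subset_closure_image (horoMap_continuous x0 g)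
    have h3 : horoMap x0 g '' Set.range (horoemb x0) ⊆ Set.range (horoemb x0) := by
      rintro _ ⟨_, ⟨w, rfl⟩, rfl⟩
      exact ⟨g w, (horoMap_horoemb x0 g w).symm⟩
    exact closure_mono h3 (h2 ⟨f, hf1, rfl⟩)
  · intro hmem
    obtain ⟨w, hw⟩ := hmem
    apply hf2
    have hfx0 : f x0 = 0 := by
      have hcl : IsClosed {u : Y → ℝ | u x0 = 0} :=
        isClosed_eq (continuous_apply x0) continuous_const
      have hsub : Set.range (horoemb x0) ⊆ {u : Y → ℝ | u x0 = 0} := by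
        rintro _ ⟨v, rfl⟩
        simp [horoemb]
      exact closure_minimal hsub hcl hf1
    refine ⟨g.symm w, ?_⟩
    have hkey : horoMap x0 g.symm (horoemb x0 w) = horoemb x0 (g.symm w) :=
      horoMap_horoemb x0 g.symm w
    rw [← hkey, hw]
    funext x
    simp only [horoMap, IsometryEquiv.symm_symm]
    rw [g.symm_apply_apply, g.symm_apply_apply, hfx0]
    ring

section Product

variable {r : ℕ} {X : Fin r → Type*} [∀ i, MetricSpace (X i)]

/-- The componentwise action of `Isom(Z) = ∏ᵢ Isom(Xᵢ)` on `Z = ∏ᵢ Xᵢ`. -/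
def apZ (g : ∀ i, X i ≃ᵢ X i) (z : ∀ i, X i) : ∀ i, X i := fun i => (g i) (z i)

variable (z0 : ∀ i, X i)

/-- The boundary `∂Z = ∏ᵢ ∂Xᵢ` of the product, using the horofunction model
(based at `z0`) of the Gromov boundary of each CAT(−1) factor. -/
abbrev BdryZ := ∀ i, {f : X i → ℝ // f ∈ horoBdry (z0 i)}

/-- The action of `Isom(Z)` on `∂Z`, componentwise. -/
def bact (g : ∀ i, X i ≃ᵢ X i) (ξ : BdryZ z0) : BdryZ z0 :=
  fun i => ⟨horoMap (z0 i) (g i) ↑(ξ i), horoMap_mem_bdry (z0 i) (g i) (ξ i).2⟩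

/-- The limit set `Λ(Γ) ⊂ ∂Z` of a subgroup `Γ ≤ Isom(Z)`: the set of accumulation
points of a `Γ`-orbit in `Z` under componentwise convergence to the boundary. -/
def limitSet (Γ : Subgroup (∀ i, X i ≃ᵢ X i)) : Set (BdryZ z0) :=
  {ξ | ∃ u : ℕ → Γ, ∀ i,
    Filter.Tendsto (fun n => horoemb (z0 i) (((u n : ∀ i, X i ≃ᵢ X i)) i (z0 i)))
      Filter.atTop (nhds ↑(ξ i))}

/-- A discrete subgroup `Γ ≤ Isom(Z)` is **transverse** if it acts properly on `Z`,
every infinite sequence in `Γ` diverges in each factor (divergence), and any two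
distinct points of the limit set differ in every component (antipodality). -/
def IsTransverse (Γ : Subgroup (∀ i, X i ≃ᵢ X i)) : Prop :=
  (∀ (z : ∀ i, X i) (c : ℝ),
      {g : Γ | ∀ i, dist ((g : ∀ i, X i ≃ᵢ X i) i (z i)) (z i) ≤ c}.Finite) ∧
  (∀ u : ℕ → Γ, Function.Injective u → ∀ (z : ∀ i, X i) (i : Fin r),
      Filter.Tendsto (fun n => dist (((u n : ∀ i, X i ≃ᵢ X i)) i (z i)) (z i))
        Filter.atTop Filter.atTop) ∧
  (∀ ξ ζ, ξ ∈ limitSet z0 Γ → ζ ∈ limitSet z0 Γ → ξ ≠ ζ → ∀ i, ξ i ≠ ζ i)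

/-- `Γ` is non-elementary: its limit set has at least three points. -/
def IsNonElementary (Γ : Subgroup (∀ i, X i ≃ᵢ X i)) : Prop :=
  ∃ ξ ζ η, ξ ∈ limitSet z0 Γ ∧ ζ ∈ limitSet z0 Γ ∧ η ∈ limitSet z0 Γ ∧
    ξ ≠ ζ ∧ ξ ≠ η ∧ ζ ≠ η

/-- The conical (radial) limit set `Λ_c(Γ) ⊂ ∂Z`: points approached by an orbit within
uniformly bounded distance of geodesic rays in every factor simultaneously;
equivalently (via shadows), `β_ξ(z₀, gₙ z₀) ≥ d(z₀, gₙ z₀) − K` in every factor. -/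
def conicalLimitSet (Γ : Subgroup (∀ i, X i ≃ᵢ X i)) : Set (BdryZ z0) :=
  {ξ | ξ ∈ limitSet z0 Γ ∧ ∃ K : ℝ, ∃ u : ℕ → Γ, Function.Injective u ∧ ∀ n i,
    dist (z0 i) (((u n : ∀ i, X i ≃ᵢ X i)) i (z0 i)) - K ≤
      (↑(ξ i) : X i → ℝ) (z0 i) - (↑(ξ i) : X i → ℝ) (((u n : ∀ i, X i ≃ᵢ X i)) i (z0 i))}

/-- `g` is a loxodromic isometry with translation length `τ > 0`: it translates some
geodesic line (its axis) by `τ`. -/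
def IsLoxodromicWith {Y : Type*} [MetricSpace Y] (g : Y ≃ᵢ Y) (τ : ℝ) : Prop :=
  0 < τ ∧ ∃ γ : ℝ → Y, IsGeodesicLine γ ∧ ∀ t, g (γ t) = γ (t + τ)

/-- A parabolic isometry of a CAT(−1) space: no fixed point in `X` and a unique fixed
point on the boundary `∂X`. -/
def IsParabolicIso {Y : Type*} [MetricSpace Y] (x0 : Y) (g : Y ≃ᵢ Y) : Prop :=
  (∀ x : Y, g x ≠ x) ∧ ∃! f : Y → ℝ, f ∈ horoBdry x0 ∧ horoMap x0 g f = f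

/-- `g ∈ Isom(Z)` is loxodromic with translation length vector `τ ∈ ℝʳ` if each
component is loxodromic with translation length `τᵢ`. -/
def IsLoxVector (g : ∀ i, X i ≃ᵢ X i) (τ : Fin r → ℝ) : Prop :=
  ∀ i, IsLoxodromicWith (g i) (τ i)

/-- The vector-valued length spectrum `Spec(Γ) ⊂ ℝʳ`. -/
def lengthSpectrum (Γ : Subgroup (∀ i, X i ≃ᵢ X i)) : Set (Fin r → ℝ) :=
  {τ | ∃ g ∈ Γ, IsLoxVector g τ}

/-- `Spec(Γ)` is non-arithmetic: it generates a dense additive subgroup of `ℝʳ`. -/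
def HasNonArithmeticSpectrum (Γ : Subgroup (∀ i, X i ≃ᵢ X i)) : Prop :=
  Dense ((AddSubgroup.closure (lengthSpectrum Γ) : AddSubgroup (Fin r → ℝ)) :
    Set (Fin r → ℝ))

/-- The horospherical foliation `H = ∂Z × ℝʳ`. -/
abbrev HorFol := BdryZ z0 × (Fin r → ℝ)

/-- The `Isom(Z)`-action on `H = ∂Z × ℝʳ`:
`g · (ξ, u) = (g ξ, u + β_ξ(g⁻¹ z₀, z₀))`, where `β` is the vector-valued Busemann
cocycle `β_ξ(z, z')ᵢ = ξᵢ(zᵢ) − ξᵢ(z'ᵢ)`. -/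
def HAct (g : ∀ i, X i ≃ᵢ X i) (p : HorFol z0) : HorFol z0 :=
  (bact z0 g p.1,
    fun i => p.2 i +
      ((↑(p.1 i) : X i → ℝ) ((g i).symm (z0 i)) - (↑(p.1 i) : X i → ℝ) (z0 i)))

/-- Translation `T_a : (ξ, u) ↦ (ξ, u + a)` on `H`. -/
def Ttrans (a : Fin r → ℝ) (p : HorFol z0) : HorFol z0 := (p.1, p.2 + a)

instance horoBdryMeasurableSpace {Y : Type*} [MetricSpace Y] (x0 : Y) :
    MeasurableSpace {f : Y → ℝ // f ∈ horoBdry x0} := borel _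

open MeasureTheory in
/-- `μ` is invariant under the `Γ`-action on `H`. -/
def InvariantUnder (Γ : Subgroup (∀ i, X i ≃ᵢ X i)) (μ : Measure (HorFol z0)) : Prop :=
  ∀ g ∈ Γ, ∀ E : Set (HorFol z0), MeasurableSet E → μ (HAct z0 g ⁻¹' E) = μ E

open MeasureTheory in
/-- The `Γ`-action on `(H, μ)` is ergodic: every `Γ`-invariant Borel set is null or
conull. -/
def ErgodicUnder (Γ : Subgroup (∀ i, X i ≃ᵢ X i)) (μ : Measure (HorFol z0)) : Prop :=
  ∀ E : Set (HorFol z0), MeasurableSet E → (∀ g ∈ Γ, HAct z0 g ⁻¹' E = E) →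
    μ E = 0 ∨ μ Eᶜ = 0

open MeasureTheory in
/-- `μ` is a Radon measure: a Borel measure finite on compact sets (on the second
countable locally compact space `H` this is the usual notion). -/
def IsRadon {α : Type*} [TopologicalSpace α] [MeasurableSpace α] (μ : Measure α) : Prop :=
  ∀ Kc : Set α, IsCompact Kc → μ Kc ≠ ⊤

/-- The Poincaré series `P_{Γ,ψ}(s) = Σ_{g ∈ Γ} e^{−s ψ(κ(z₀, g z₀))}`, where
`κ(z,z') ∈ ℝʳ` is the vector of component distances. -/
def poincareSeries (Γ : Subgroup (∀ i, X i ≃ᵢ X i)) (ψ : (Fin r → ℝ) →ₗ[ℝ] ℝ)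
    (s : ℝ) : ℝ≥0∞ :=
  ∑' g : Γ, ENNReal.ofReal
    (Real.exp (-(s * ψ (fun i => dist (z0 i) (((g : ∀ i, X i ≃ᵢ X i)) i (z0 i))))))

/-- The critical exponent `δ_ψ(Γ)`. -/
def critExponent (Γ : Subgroup (∀ i, X i ≃ᵢ X i)) (ψ : (Fin r → ℝ) →ₗ[ℝ] ℝ) : ℝ :=
  sInf {s : ℝ | 0 < s ∧ poincareSeries z0 Γ ψ s ≠ ⊤}

/-- `Γ` is of `ψ`-divergence type: `δ_ψ(Γ) < ∞` and the Poincaré series diverges at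
`δ_ψ(Γ)`. -/
def IsDivergenceType (Γ : Subgroup (∀ i, X i ≃ᵢ X i)) (ψ : (Fin r → ℝ) →ₗ[ℝ] ℝ) : Prop :=
  {s : ℝ | 0 < s ∧ poincareSeries z0 Γ ψ s ≠ ⊤}.Nonempty ∧
  poincareSeries z0 Γ ψ (critExponent z0 Γ ψ) = ⊤

open MeasureTheory in
/-- A `δ`-dimensional `ψ`-conformal density of `Γ`: a `Γ`-equivariant family
`{ν_z}_{z ∈ Z}` of Borel measures on `Λ(Γ) ⊂ ∂Z` with
`dν_z/dν_w(ξ) = e^{−δ·ψ(β_ξ(z,w))}` and `ν_{z₀}(∂Z) = 1`. -/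
structure ConformalDensity (Γ : Subgroup (∀ i, X i ≃ᵢ X i)) (δ : ℝ)
    (ψ : (Fin r → ℝ) →ₗ[ℝ] ℝ) where
  nu : (∀ i, X i) → Measure (BdryZ z0)
  equivariant : ∀ g ∈ Γ, ∀ z, (nu z).map (bact z0 g) = nu (apZ g z)
  conformal : ∀ z w, nu z = (nu w).withDensity fun ξ =>
    ENNReal.ofReal (Real.exp (-(δ * ψ (fun i =>
      (↑(ξ i) : X i → ℝ) (z i) - (↑(ξ i) : X i → ℝ) (w i)))))
  normalized : nu z0 Set.univ = 1
  onLimitSet : nu z0 (limitSet z0 Γ)ᶜ = 0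

open MeasureTheory in
/-- The measure `dμ(ξ, u) = e^{δ·ψ(u)} dν(ξ) du` on `H = ∂Z × ℝʳ`. -/
def muH (ν : Measure (BdryZ z0)) (δ : ℝ) (ψ : (Fin r → ℝ) →ₗ[ℝ] ℝ) :
    Measure (HorFol z0) :=
  (ν.prod volume).withDensity fun p => ENNReal.ofReal (Real.exp (δ * ψ p.2))

end Product

/-!
In CAT(−1) the distance from `g x` to `[x, h x]` is the Gromov product `(x | h x)_{g x}` up to
an additive constant; translating by `g⁻¹` and moving the base point to `z0`, this is
`(γ z0 | φ z0)_{z0}` with `γ = g⁻¹`, `φ = g⁻¹ h`, up to `3 d(z, z0)`. So it suffices that these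
Gromov products cannot stay bounded in one factor while diverging in another. If they did, both
orbit sequences would escape in that other factor, hence by divergence in every factor, and along
a subsequence they converge to points `ξ, η` of the limit set. Diverging Gromov products force
`ξᵢ = ηᵢ` by the CAT(−1) comparison, so `ξ = η` by antipodality. In the factor where the Gromov
products are bounded by `C` this gives `2 ξⱼ ≥ -2C`, whereas the horofunction `ξⱼ` of a boundary
point is unbounded below.
-/

lemma arcosh_le_of_le_cosh {y M : ℝ} (hy : 0 < y) (hM : 0 ≤ M) (h : y ≤ cosh M) :
    _root_.arcosh y ≤ M :=
  calc Real.arcosh y ≤ Real.arcosh (cosh M) := (Real.arcosh_le_arcosh hy (cosh_pos M)).2 h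
    _ = M := Real.arcosh_cosh hM

lemma sinh_sub_le_exp_neg_mul_sinh (a : ℝ) {g : ℝ} (hg : 0 ≤ g) :
    sinh (a - g) ≤ exp (-g) * sinh a := by
  have h : exp (-g) * exp (-a) ≤ exp (-(a - g)) := by
    rw [← exp_add]; exact exp_le_exp.2 (by linarith)
  have h' : exp (a - g) = exp (-g) * exp a := by rw [← exp_add]; ring_nf
  rw [sinh_eq, sinh_eq, h']
  linarith

lemma sinh_le_half_exp (t : ℝ) : sinh t ≤ exp t / 2 := by
  rw [sinh_eq]; linarith [exp_pos (-t)]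

lemma half_exp_le_cosh (t : ℝ) : exp t / 2 ≤ cosh t := by
  rw [cosh_eq]; linarith [exp_pos (-t)]

lemma one_add_sq_div_two_le_cosh {t : ℝ} (ht : 0 ≤ t) : 1 + t ^ 2 / 2 ≤ cosh t := by
  have hs : t / 2 ≤ sinh (t / 2) := self_le_sinh_iff.2 (by linarith)
  have h2 := cosh_two_mul (t / 2)
  rw [mul_div_cancel₀ t two_ne_zero] at h2
  nlinarith [cosh_sq (t / 2)]

lemma cosh_sub_cosh (x y : ℝ) :
    cosh x - cosh y = 2 * sinh ((x + y) / 2) * sinh ((x - y) / 2) := by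
  have h1 := cosh_add ((x + y) / 2) ((x - y) / 2)
  have h2 := cosh_sub ((x + y) / 2) ((x - y) / 2)
  rw [show (x + y) / 2 + (x - y) / 2 = x by ring] at h1
  rw [show (x + y) / 2 - (x - y) / 2 = y by ring] at h2
  linarith

/-- In a hyperbolic triangle with sides `A`, `B` at a vertex and opposite side `C`, the points
at distance `t` from the vertex on the two sides are `e^(t - G)`-close, where `G` is the Gromov
product `(A + B - C) / 2`. -/
lemma cmpDist_diag_le_exp {A B C t : ℝ} (hA : 0 < A) (hB : 0 < B) (hBA : B - A ≤ C)
    (hAB : A - B ≤ C) (hC : C ≤ A + B) (ht : 0 ≤ t) :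
    cmpDist A B C t t ≤ exp (t - (A + B - C) / 2) := by
  set G := (A + B - C) / 2 with hG
  have hnum : cosh C - cosh (A - B) = 2 * sinh (A - G) * sinh (B - G) := by
    rw [cosh_sub_cosh]; congr 3 <;> ring
  have harg : cosh t * cosh t - sinh t * sinh t * cmpCos A B C
      = 1 + sinh t ^ 2 * (2 * sinh (A - G) * sinh (B - G) / (sinh A * sinh B)) := by
    rw [← hnum, cmpCos, cosh_sub A B]
    field_simp
    linear_combination sinh A * sinh B * cosh_sq t
  have hsAG : 0 ≤ sinh (A - G) := sinh_nonneg_iff.2 (by linarith)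
  have hsBG : 0 ≤ sinh (B - G) := sinh_nonneg_iff.2 (by linarith)
  have hfrac : 2 * sinh (A - G) * sinh (B - G) / (sinh A * sinh B) ≤ 2 * exp (-G) ^ 2 := by
    have h1 := sinh_sub_le_exp_neg_mul_sinh A (show 0 ≤ G by linarith)
    have h2 := sinh_sub_le_exp_neg_mul_sinh B (show 0 ≤ G by linarith)
    rw [div_le_iff₀ (by positivity)]
    nlinarith [mul_le_mul h1 h2 hsBG (by positivity)]
  have hsinh : sinh t ^ 2 ≤ (exp t / 2) ^ 2 :=
    pow_le_pow_left₀ (sinh_nonneg_iff.2 ht) (sinh_le_half_exp t) 2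
  apply arcosh_le_of_le_cosh (by rw [harg]; positivity) (exp_pos _).le
  calc cosh t * cosh t - sinh t * sinh t * cmpCos A B C
      ≤ 1 + (exp t / 2) ^ 2 * (2 * exp (-G) ^ 2) := by
        rw [harg]; gcongr
    _ = 1 + exp (t - G) ^ 2 / 2 := by rw [exp_sub, exp_neg]; field_simp
    _ ≤ cosh (exp (t - G)) := one_add_sq_div_two_le_cosh (exp_pos _).le

/-- In a hyperbolic triangle with sides `ρ ≤ B` at a vertex and opposite side `C`, the point at
distance `t ≥ ρ` from the vertex on the side of length `B` is at distance `C - (B - t)` from the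
far end of the other side, up to an error exponentially small in `t - ρ`. -/
lemma cmpDist_le_sub_add_exp {ρ B C t : ℝ} (hρ : 0 ≤ ρ) (hρt : ρ ≤ t) (ht : 0 < t)
    (htB : t ≤ B) (hC : B - ρ ≤ C) :
    cmpDist ρ B C ρ t ≤ C - (B - t) + (2 * cosh ρ + 1) * exp (ρ - t) := by
  set ε := (2 * cosh ρ + 1) * exp (ρ - t) with hε
  have hε0 : 0 < ε := by positivity
  set M := C - (B - t) + ε with hM
  rcases hρ.eq_or_lt with rfl | hρ0
  · have harg : cosh 0 * cosh t - sinh 0 * sinh t * cmpCos 0 B C = cosh t := by simp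
    apply arcosh_le_of_le_cosh (by rw [harg]; positivity) (by linarith)
    rw [harg, cosh_le_cosh, abs_of_pos ht, abs_of_nonneg (by linarith)]
    linarith
  have hsB : 0 < sinh B := sinh_pos_iff.2 (by linarith)
  have harg : cosh ρ * cosh t - sinh ρ * sinh t * cmpCos ρ B C
      = (cosh ρ * sinh (B - t) + cosh C * sinh t) / sinh B := by
    have : sinh ρ ≠ 0 := (sinh_pos_iff.2 hρ0).ne'
    rw [cmpCos, sinh_sub]
    field_simp
    ring
  have hpos : 0 < (cosh ρ * sinh (B - t) + cosh C * sinh t) / sinh B := by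
    have := sinh_pos_iff.2 ht
    positivity
  apply arcosh_le_of_le_cosh (harg ▸ hpos) (by linarith)
  have h1 := sinh_sub_le_exp_neg_mul_sinh B ht.le
  have h2 := sinh_sub_le_exp_neg_mul_sinh B (show 0 ≤ B - t by linarith)
  rw [sub_sub_cancel] at h2
  have hexpC : cosh C * exp (-(B - t)) = exp (C - B + t) / 2 + exp (-C - B + t) / 2 := by
    rw [cosh_eq, add_div, add_mul, div_mul_eq_mul_div, div_mul_eq_mul_div, ← exp_add, ← exp_add]
    ring_nf
  have hE1 : 1 ≤ exp (C - B + t) := one_le_exp (by linarith)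
  calc cosh ρ * cosh t - sinh ρ * sinh t * cmpCos ρ B C
      ≤ cosh ρ * exp (-t) + cosh C * exp (-(B - t)) := by
        rw [harg, div_le_iff₀ hsB]
        nlinarith [mul_le_mul_of_nonneg_left h1 (cosh_pos ρ).le,
          mul_le_mul_of_nonneg_left h2 (cosh_pos C).le]
    _ ≤ exp (C - B + t) / 2 + (cosh ρ + 1 / 2) * exp (ρ - t) := by
        rw [hexpC]
        have : exp (-C - B + t) ≤ exp (ρ - t) := exp_le_exp.2 (by linarith)
        have : cosh ρ * exp (-t) ≤ cosh ρ * exp (ρ - t) :=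
          mul_le_mul_of_nonneg_left (exp_le_exp.2 (by linarith)) (cosh_pos ρ).le
        linarith
    _ ≤ exp (C - B + t) * (1 + ε) / 2 := by
        rw [hε]; nlinarith [exp_pos (ρ - t), cosh_pos ρ]
    _ ≤ exp (C - B + t) * exp ε / 2 := by
        gcongr; linarith [add_one_le_exp ε]
    _ = exp M / 2 := by rw [← exp_add, hM]; ring_nf
    _ ≤ cosh M := half_exp_le_cosh M

section GromovProduct

variable {Y : Type*} [MetricSpace Y]

def gromovProduct (p a b : Y) : ℝ := (dist p a + dist p b - dist a b) / 2

lemma gromovProduct_nonneg (p a b : Y) : 0 ≤ gromovProduct p a b := by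
  unfold gromovProduct; linarith [dist_triangle_left a b p]

lemma gromovProduct_le_dist_left (p a b : Y) : gromovProduct p a b ≤ dist p a := by
  unfold gromovProduct; linarith [dist_triangle p a b]

lemma gromovProduct_le_dist_right (p a b : Y) : gromovProduct p a b ≤ dist p b := by
  unfold gromovProduct; linarith [dist_triangle p b a, dist_comm a b]

lemma abs_gromovProduct_sub_le (p a b p' a' b' : Y) :
    |gromovProduct p a b - gromovProduct p' a' b'| ≤ dist p p' + dist a a' + dist b b' := by
  have h1 := dist_dist_dist_le p a p' a'
  have h2 := dist_dist_dist_le p b p' b'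
  have h3 := dist_dist_dist_le a b a' b'
  rw [Real.dist_eq, abs_le] at h1 h2 h3
  unfold gromovProduct
  rw [abs_le]; constructor <;> linarith

lemma Isometry.gromovProduct_eq {Y' : Type*} [MetricSpace Y'] {f : Y → Y'} (hf : Isometry f)
    (p a b : Y) : gromovProduct (f p) (f a) (f b) = gromovProduct p a b := by
  simp only [gromovProduct, hf.dist_eq]

lemma neg_two_mul_gromovProduct_le_horoemb_add (p a b x : Y) :
    -(2 * gromovProduct p a b) ≤ horoemb p a x + horoemb p b x := by
  unfold gromovProduct horoemb; linarith [dist_triangle_left a b x]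

lemma lipschitzWith_horoemb (x0 c : Y) : LipschitzWith 1 (horoemb x0 c) :=
  LipschitzWith.of_dist_le_mul fun x y => by
    simpa [horoemb, Real.dist_eq] using abs_dist_sub_le x y c

lemma abs_horoemb_le (x0 c x : Y) : |horoemb x0 c x| ≤ dist x x0 :=
  abs_dist_sub_le x x0 c

lemma neg_dist_le_horoemb (x0 c x : Y) : -dist x0 c ≤ horoemb x0 c x := by
  unfold horoemb; linarith [dist_nonneg (x := x) (y := c)]

lemma abs_horoemb_sub_horoemb_le (x0 p q x : Y) :
    |horoemb x0 p x - horoemb x0 q x| ≤ 2 * dist p q := by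
  unfold horoemb
  rw [abs_le]
  constructor <;> linarith [dist_triangle x q p, dist_triangle x p q, dist_triangle x0 q p,
    dist_triangle x0 p q, dist_comm p q]

end GromovProduct

namespace GeodesicStructure

variable {Y : Type*} [MetricSpace Y] (G : GeodesicStructure Y)

lemma dist_geo_left (x y : Y) {t : ℝ} (ht : t ∈ Icc 0 (dist x y)) :
    dist x (G.geo x y t) = t := by
  have h := G.geo_isom x y 0 ⟨le_rfl, dist_nonneg⟩ t ht
  rw [G.geo_zero, zero_sub, abs_neg, abs_of_nonneg ht.1] at h
  exact h

lemma dist_geo_right (x y : Y) {t : ℝ} (ht : t ∈ Icc 0 (dist x y)) :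
    dist (G.geo x y t) y = dist x y - t := by
  have h := G.geo_isom x y t ht (dist x y) ⟨dist_nonneg, le_rfl⟩
  rw [G.geo_end, abs_of_nonpos (by linarith [ht.2])] at h
  linarith

lemma geo_mem_seg (x y : Y) {t : ℝ} (ht : t ∈ Icc 0 (dist x y)) : G.geo x y t ∈ G.seg x y :=
  ⟨t, ht, rfl⟩

lemma seg_nonempty (x y : Y) : (G.seg x y).Nonempty :=
  ⟨_, G.geo_mem_seg x y ⟨le_rfl, dist_nonneg⟩⟩

lemma gromovProduct_le_infDist (p a b : Y) : gromovProduct p a b ≤ infDist p (G.seg a b) := by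
  by_contra! h
  obtain ⟨_, ⟨s, hs, rfl⟩, hlt⟩ := (infDist_lt_iff (G.seg_nonempty a b)).1 h
  have h1 := dist_triangle p (G.geo a b s) a
  have h2 := dist_triangle p (G.geo a b s) b
  rw [dist_comm (G.geo a b s) a, G.dist_geo_left a b hs] at h1
  rw [G.dist_geo_right a b hs] at h2
  unfold gromovProduct at hlt
  linarith

end GeodesicStructure

namespace GeodesicStructure.IsCATNegOne

variable {Y : Type*} [MetricSpace Y] {G : GeodesicStructure Y} (hCAT : G.IsCATNegOne)
include hCAT

lemma dist_geo_geo_le (x0 a b : Y) {t : ℝ} (ht0 : 0 ≤ t) (ht : t ≤ gromovProduct x0 a b) :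
    dist (G.geo x0 a t) (G.geo x0 b t) ≤ exp (t - gromovProduct x0 a b) := by
  rcases ht0.eq_or_lt with rfl | ht0
  · rw [G.geo_zero, G.geo_zero, dist_self]; positivity
  have hta := ht.trans (gromovProduct_le_dist_left x0 a b)
  have htb := ht.trans (gromovProduct_le_dist_right x0 a b)
  refine (hCAT x0 a b t ⟨ht0.le, hta⟩ t ⟨ht0.le, htb⟩).trans ?_
  exact cmpDist_diag_le_exp (by linarith) (by linarith)
    (by linarith [dist_triangle x0 a b]) (by linarith [dist_triangle x0 b a, dist_comm a b])
    (by linarith [dist_triangle a x0 b, dist_comm a x0]) ht0.le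

/-- The point of `[a, b]` at distance `(p | b)_a` from `a` is `1`-close to `[a, p]`. -/
lemma infDist_seg_le (p a b : Y) : infDist p (G.seg a b) ≤ gromovProduct p a b + 1 := by
  set s := gromovProduct a p b
  have hs0 : 0 ≤ s := gromovProduct_nonneg a p b
  have hsp : s ∈ Icc 0 (dist a p) := ⟨hs0, gromovProduct_le_dist_left a p b⟩
  have hsb : s ∈ Icc 0 (dist a b) := ⟨hs0, gromovProduct_le_dist_right a p b⟩
  have hclose := hCAT.dist_geo_geo_le a p b hs0 le_rfl
  rw [sub_self, exp_zero] at hclose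
  calc infDist p (G.seg a b) ≤ dist p (G.geo a b s) :=
        infDist_le_dist_of_mem (G.geo_mem_seg a b hsb)
    _ ≤ dist p (G.geo a p s) + dist (G.geo a p s) (G.geo a b s) := dist_triangle _ _ _
    _ ≤ (dist a p - s) + 1 := by rw [dist_comm, G.dist_geo_right a p hsp]; linarith
    _ = gromovProduct p a b + 1 := by simp only [s, gromovProduct, dist_comm a p]; ring

lemma abs_horoemb_sub_horoemb_geo_le (x0 b x : Y) {t : ℝ} (hxt : dist x0 x ≤ t) (ht : 0 < t)
    (htb : t ≤ dist x0 b) :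
    |horoemb x0 b x - horoemb x0 (G.geo x0 b t) x|
      ≤ (2 * cosh (dist x0 x) + 1) * exp (dist x0 x - t) := by
  have hmem : t ∈ Icc 0 (dist x0 b) := ⟨ht.le, htb⟩
  have hcmp := (hCAT x0 x b (dist x0 x) ⟨dist_nonneg, le_rfl⟩ t hmem).trans
    (cmpDist_le_sub_add_exp dist_nonneg hxt ht htb
      (by linarith [dist_triangle x0 x b, dist_comm x0 x]))
  rw [G.geo_end] at hcmp
  have hpb := G.dist_geo_right x0 b hmem
  unfold horoemb
  rw [G.dist_geo_left x0 b hmem, abs_le]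
  constructor <;> linarith [dist_triangle x (G.geo x0 b t) b]

lemma abs_horoemb_sub_horoemb_le_of_le_gromovProduct (x0 a b x : Y) {t : ℝ}
    (hxt : dist x0 x ≤ t) (ht : 0 < t) (htG : t ≤ gromovProduct x0 a b) :
    |horoemb x0 a x - horoemb x0 b x|
      ≤ 2 * ((2 * cosh (dist x0 x) + 1) * exp (dist x0 x - t))
        + 2 * exp (t - gromovProduct x0 a b) := by
  have ha := hCAT.abs_horoemb_sub_horoemb_geo_le x0 a x hxt ht
    (htG.trans (gromovProduct_le_dist_left x0 a b))
  have hb := hCAT.abs_horoemb_sub_horoemb_geo_le x0 b x hxt ht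
    (htG.trans (gromovProduct_le_dist_right x0 a b))
  have hab := (abs_horoemb_sub_horoemb_le x0 (G.geo x0 a t) (G.geo x0 b t) x).trans
    (mul_le_mul_of_nonneg_left (hCAT.dist_geo_geo_le x0 a b ht.le htG) zero_le_two)
  rw [abs_le] at ha hb hab ⊢
  constructor <;> linarith

lemma eq_of_tendsto_horoemb {x0 : Y} {a b : ℕ → Y} {f g : Y → ℝ}
    (hab : Tendsto (fun n => gromovProduct x0 (a n) (b n)) atTop atTop)
    (ha : Tendsto (fun n => horoemb x0 (a n)) atTop (𝓝 f))
    (hb : Tendsto (fun n => horoemb x0 (b n)) atTop (𝓝 g)) : f = g := by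
  funext x
  set ρ := dist x0 x
  set K := 2 * (2 * cosh ρ + 1) * exp ρ + 2
  have hsmall :
      Tendsto (fun n => K * exp (-(gromovProduct x0 (a n) (b n) / 2))) atTop (𝓝 0) := by
    simpa using (tendsto_exp_neg_atTop_nhds_zero.comp (hab.atTop_div_const two_pos)).const_mul K
  have hbound : ∀ᶠ n in atTop, |horoemb x0 (a n) x - horoemb x0 (b n) x|
      ≤ K * exp (-(gromovProduct x0 (a n) (b n) / 2)) := by
    filter_upwards [hab.eventually_ge_atTop (2 * ρ + 1)] with n hn
    set t := gromovProduct x0 (a n) (b n) / 2 with ht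
    have hρ : 0 ≤ ρ := dist_nonneg
    refine (hCAT.abs_horoemb_sub_horoemb_le_of_le_gromovProduct x0 (a n) (b n) x (t := t)
      (by linarith) (by linarith) (by linarith)).trans (le_of_eq ?_)
    rw [show ρ - t = ρ + -t by ring, show t - gromovProduct x0 (a n) (b n) = -t by ring, exp_add]
    ring
  have hlim := (tendsto_pi_nhds.1 ha x).sub (tendsto_pi_nhds.1 hb x)
  exact sub_eq_zero.1 (tendsto_nhds_unique hlim (squeeze_zero_norm' hbound hsmall))

end GeodesicStructure.IsCATNegOne

section Proper

variable {Y : Type*} [MetricSpace Y] [ProperSpace Y] {x0 : Y} {c : ℕ → Y} {f : Y → ℝ}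

/-- `-t` is attained at a limit point of the points at distance `t` from `x0` on `[x0, cₙ]`. -/
lemma GeodesicStructure.exists_eq_neg_of_tendsto_horoemb (G : GeodesicStructure Y)
    (hc : Tendsto (fun n => dist x0 (c n)) atTop atTop)
    (hf : Tendsto (fun n => horoemb x0 (c n)) atTop (𝓝 f)) {t : ℝ} (ht : 0 ≤ t) :
    ∃ y, f y = -t := by
  set p : ℕ → Y := fun n => G.geo x0 (c n) (min t (dist x0 (c n)))
  have hmem : ∀ n, min t (dist x0 (c n)) ∈ Icc 0 (dist x0 (c n)) :=
    fun n => ⟨le_min ht dist_nonneg, min_le_right _ _⟩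
  have hball : ∀ n, p n ∈ closedBall x0 t := fun n => by
    rw [mem_closedBall, dist_comm, G.dist_geo_left x0 (c n) (hmem n)]
    exact min_le_left _ _
  obtain ⟨y, -, φ, hφ, hpy⟩ := (isCompact_closedBall x0 t).tendsto_subseq hball
  have hval : ∀ᶠ k in atTop, horoemb x0 (c (φ k)) (p (φ k)) = -t := by
    filter_upwards [(hc.comp hφ.tendsto_atTop).eventually_ge_atTop t] with k hk
    have hmin : min t (dist x0 (c (φ k))) = t := min_eq_left hk
    have hd := G.dist_geo_right x0 _ (hmem (φ k))
    rw [hmin] at hd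
    simp only [horoemb, p, hmin, hd]
    ring
  have hnear : Tendsto (fun k => horoemb x0 (c (φ k)) y - horoemb x0 (c (φ k)) (p (φ k)))
      atTop (𝓝 0) := by
    refine squeeze_zero_norm (fun k => ?_) (tendsto_iff_dist_tendsto_zero.1 hpy)
    rw [Real.norm_eq_abs, ← Real.dist_eq, dist_comm]
    exact (lipschitzWith_horoemb x0 _).dist_le_mul _ _ |>.trans_eq (one_mul _)
  have hy : Tendsto (fun k => horoemb x0 (c (φ k)) y) atTop (𝓝 (f y)) :=
    tendsto_pi_nhds.1 (hf.comp hφ.tendsto_atTop) y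
  refine ⟨y, tendsto_nhds_unique hy ?_⟩
  simpa using (tendsto_const_nhds.congr' (hval.mono fun k hk => hk.symm)).add hnear

lemma GeodesicStructure.not_bddBelow_of_tendsto_horoemb (G : GeodesicStructure Y)
    (hc : Tendsto (fun n => dist x0 (c n)) atTop atTop)
    (hf : Tendsto (fun n => horoemb x0 (c n)) atTop (𝓝 f)) : ¬ BddBelow (range f) := by
  rintro ⟨m, hm⟩
  obtain ⟨y, hy⟩ := G.exists_eq_neg_of_tendsto_horoemb hc hf (by positivity : 0 ≤ |m| + 1)
  linarith [hm ⟨y, hy⟩, neg_abs_le m]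

lemma GeodesicStructure.mem_horoBdry_of_tendsto (G : GeodesicStructure Y)
    (hc : Tendsto (fun n => dist x0 (c n)) atTop atTop)
    (hf : Tendsto (fun n => horoemb x0 (c n)) atTop (𝓝 f)) : f ∈ horoBdry x0 := by
  refine ⟨mem_closure_of_tendsto hf (Eventually.of_forall fun n => mem_range_self _), ?_⟩
  rintro ⟨w, rfl⟩
  exact G.not_bddBelow_of_tendsto_horoemb hc hf ⟨-dist x0 w, by
    rintro _ ⟨x, rfl⟩; exact neg_dist_le_horoemb x0 w x⟩

end Proper

lemma cauchySeq_of_lipschitzWith_of_dense {Y α : Type*} [PseudoMetricSpace Y]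
    [PseudoMetricSpace α] {F : ℕ → Y → α} (hF : ∀ k, LipschitzWith 1 (F k)) {s : Set Y}
    (hs : Dense s) (h : ∀ y ∈ s, CauchySeq fun k => F k y) (x : Y) :
    CauchySeq fun k => F k x := by
  rw [Metric.cauchySeq_iff']
  intro ε hε
  obtain ⟨y, hy, hxy⟩ := hs.exists_dist_lt x (show 0 < ε / 3 by positivity)
  obtain ⟨N, hN⟩ := Metric.cauchySeq_iff'.1 (h y hy) (ε / 3) (by positivity)
  refine ⟨N, fun n hn => ?_⟩
  have hLip : ∀ k, dist (F k x) (F k y) ≤ dist x y := fun k => by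
    simpa using (hF k).dist_le_mul x y
  calc dist (F n x) (F N x) ≤ dist (F n x) (F n y) + dist (F n y) (F N y) + dist (F N y) (F N x) :=
        dist_triangle4 _ _ _ _
    _ < ε / 3 + ε / 3 + ε / 3 := by
        rw [dist_comm (F N y)]
        gcongr
        · exact (hLip n).trans_lt hxy
        · exact hN n hn
        · exact (hLip N).trans_lt hxy
    _ = ε := by ring

open TopologicalSpace in
lemma exists_subseq_tendsto_horoemb {ι : Type*} [Countable ι] {X : ι → Type*}
    [∀ i, MetricSpace (X i)] [∀ i, SeparableSpace (X i)] (x0 : ∀ i, X i) (c : ℕ → ∀ i, X i) :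
    ∃ φ : ℕ → ℕ, StrictMono φ ∧ ∃ f : ∀ i, X i → ℝ,
      ∀ i, Tendsto (fun k => horoemb (x0 i) (c (φ k) i)) atTop (𝓝 (f i)) := by
  have : ∀ i, Nonempty (X i) := fun i => ⟨x0 i⟩
  let S : ℕ → ι × ℕ → ℝ := fun n j => horoemb (x0 j.1) (c n j.1) (denseSeq (X j.1) j.2)
  have hS : ∀ n, S n ∈ univ.pi fun j => Icc (-dist (denseSeq (X j.1) j.2) (x0 j.1))
      (dist (denseSeq (X j.1) j.2) (x0 j.1)) :=
    fun n j _ => abs_le.1 (abs_horoemb_le _ _ _)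
  obtain ⟨a, -, φ, hφ, hlim⟩ := (isCompact_univ_pi fun _ => isCompact_Icc).tendsto_subseq hS
  have hcauchy : ∀ i x, CauchySeq fun k => horoemb (x0 i) (c (φ k) i) x := fun i =>
    cauchySeq_of_lipschitzWith_of_dense (fun k => lipschitzWith_horoemb _ _)
      (denseRange_denseSeq (X i)) (by
        rintro _ ⟨m, rfl⟩
        exact (tendsto_pi_nhds.1 hlim (i, m)).cauchySeq)
  choose f hf using fun i x => cauchySeq_tendsto_of_complete (hcauchy i x)
  exact ⟨φ, hφ, f, fun i => tendsto_pi_nhds.2 (hf i)⟩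

lemma tendsto_cofinite_of_tendsto_comp_atTop {α : Type*} {f : α → ℝ} {u : ℕ → α}
    (h : Tendsto (f ∘ u) atTop atTop) : Tendsto u atTop cofinite :=
  le_cofinite_iff_eventually_ne.2 fun a =>
    (h.eventually_gt_atTop (f a)).mono fun _ hn hna => hn.ne' (by rw [Function.comp_apply, hna])

lemma abs_gromovProduct_sub_gromovProduct_symm_le {Y : Type*} [MetricSpace Y] (g h : Y ≃ᵢ Y)
    (x x0 : Y) :
    |gromovProduct (g x) x (h x) - gromovProduct x0 (g.symm x0) (g.symm (h x0))|
      ≤ 3 * dist x x0 := by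
  rw [← g.symm.isometry.gromovProduct_eq, g.symm_apply_apply]
  refine (abs_gromovProduct_sub_le _ _ _ _ _ _).trans (le_of_eq ?_)
  rw [g.symm.dist_eq, g.symm.dist_eq, h.dist_eq]
  ring

namespace IsTransverse

variable {r : ℕ} {X : Fin r → Type*} [∀ i, MetricSpace (X i)] {z0 : ∀ i, X i}
  {Γ : Subgroup (∀ i, X i ≃ᵢ X i)}

lemma tendsto_dist_cofinite (htr : IsTransverse z0 Γ) (z : ∀ i, X i) (i : Fin r) :
    Tendsto (fun g : Γ => dist (z i) ((g : ∀ i, X i ≃ᵢ X i) i (z i))) cofinite atTop := by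
  refine tendsto_atTop.2 fun b => eventually_cofinite.2 ?_
  by_contra hinf
  let u := Set.Infinite.natEmbedding _ hinf
  obtain ⟨n, hn⟩ := ((htr.2.1 (fun n => (u n : Γ)) (Subtype.val_injective.comp u.injective) z
    i).eventually_ge_atTop b).exists
  exact (u n).2 (by rwa [dist_comm])

lemma tendsto_dist_of_tendsto_dist (htr : IsTransverse z0 Γ) {u : ℕ → ∀ i, X i ≃ᵢ X i}
    (hu : ∀ n, u n ∈ Γ) {i₀ : Fin r}
    (h : Tendsto (fun n => dist (z0 i₀) (u n i₀ (z0 i₀))) atTop atTop) (i : Fin r) :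
    Tendsto (fun n => dist (z0 i) (u n i (z0 i))) atTop atTop :=
  (htr.tendsto_dist_cofinite z0 i).comp
    (tendsto_cofinite_of_tendsto_comp_atTop (u := fun n => (⟨u n, hu n⟩ : Γ))
      (f := fun g : Γ => dist (z0 i₀) ((g : ∀ i, X i ≃ᵢ X i) i₀ (z0 i₀))) h)

lemma exists_mem_limitSet_of_tendsto [∀ i, ProperSpace (X i)] (G : ∀ i, GeodesicStructure (X i))
    {u : ℕ → ∀ i, X i ≃ᵢ X i} (hu : ∀ n, u n ∈ Γ)
    (hesc : ∀ i, Tendsto (fun n => dist (z0 i) (u n i (z0 i))) atTop atTop) {f : ∀ i, X i → ℝ}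
    (hf : ∀ i, Tendsto (fun n => horoemb (z0 i) (u n i (z0 i))) atTop (𝓝 (f i))) :
    ∃ ξ ∈ limitSet z0 Γ, ∀ i, (ξ i : X i → ℝ) = f i :=
  ⟨fun i => ⟨f i, (G i).mem_horoBdry_of_tendsto (hesc i) (hf i)⟩, ⟨fun n => ⟨u n, hu n⟩, hf⟩,
    fun _ => rfl⟩

variable [∀ i, ProperSpace (X i)] (G : ∀ i, GeodesicStructure (X i))
  (hX : ∀ i, (G i).IsCATNegOne)
include hX

theorem not_bddAbove_gromovProduct (htr : IsTransverse z0 Γ) {γ φ : ℕ → ∀ i, X i ≃ᵢ X i}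
    (hγ : ∀ n, γ n ∈ Γ) (hφ : ∀ n, φ n ∈ Γ) {i : Fin r}
    (hi : Tendsto (fun n => gromovProduct (z0 i) (γ n i (z0 i)) (φ n i (z0 i))) atTop atTop)
    (j : Fin r) :
    ¬ BddAbove (range fun n => gromovProduct (z0 j) (γ n j (z0 j)) (φ n j (z0 j))) := by
  rintro ⟨C, hC⟩
  have hescγ := htr.tendsto_dist_of_tendsto_dist hγ
    (tendsto_atTop_mono (fun n => gromovProduct_le_dist_left _ _ _) hi)
  have hescφ := htr.tendsto_dist_of_tendsto_dist hφ
    (tendsto_atTop_mono (fun n => gromovProduct_le_dist_right _ _ _) hi)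
  obtain ⟨ψ₁, hψ₁, f, hf⟩ := exists_subseq_tendsto_horoemb z0 fun n k => γ n k (z0 k)
  obtain ⟨ψ₂, hψ₂, f', hf'⟩ := exists_subseq_tendsto_horoemb z0 fun n k => φ (ψ₁ n) k (z0 k)
  have hψ : Tendsto (ψ₁ ∘ ψ₂) atTop atTop := (hψ₁.comp hψ₂).tendsto_atTop
  have hfγ : ∀ k, Tendsto (fun n => horoemb (z0 k) (γ (ψ₁ (ψ₂ n)) k (z0 k))) atTop (𝓝 (f k)) :=
    fun k => (hf k).comp hψ₂.tendsto_atTop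
  obtain ⟨ξ, hξ, hξf⟩ := exists_mem_limitSet_of_tendsto G (fun n => hγ _)
    (fun k => (hescγ k).comp hψ) hfγ
  obtain ⟨η, hη, hηf⟩ := exists_mem_limitSet_of_tendsto G (fun n => hφ _)
    (fun k => (hescφ k).comp hψ) hf'
  have hξη : ξ = η := by
    by_contra hne
    refine htr.2.2 ξ η hξ hη hne i (Subtype.ext ?_)
    rw [hξf, hηf]
    exact (hX i).eq_of_tendsto_horoemb (hi.comp hψ) (hfγ i) (hf' i)
  have hff : f j = f' j := by rw [← hξf, ← hηf, hξη]
  refine (G j).not_bddBelow_of_tendsto_horoemb ((hescγ j).comp hψ) (hfγ j) ⟨-C, ?_⟩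
  rintro _ ⟨x, rfl⟩
  have hsum : -(2 * C) ≤ f j x + f' j x :=
    ge_of_tendsto ((tendsto_pi_nhds.1 (hfγ j) x).add (tendsto_pi_nhds.1 (hf' j) x))
      (Eventually.of_forall fun n => (neg_two_mul_gromovProduct_le_horoemb_add _ _ _ x).trans'
        (neg_le_neg (mul_le_mul_of_nonneg_left (hC ⟨ψ₁ (ψ₂ n), rfl⟩) zero_le_two)))
  rw [← hff] at hsum
  linarith

theorem exists_gromovProduct_le (htr : IsTransverse z0 Γ) (j : Fin r) (C : ℝ) :
    ∃ B, ∀ γ ∈ Γ, ∀ φ ∈ Γ, gromovProduct (z0 j) (γ j (z0 j)) (φ j (z0 j)) ≤ C →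
      ∀ i, gromovProduct (z0 i) (γ i (z0 i)) (φ i (z0 i)) ≤ B := by
  have hfactor : ∀ i, ∃ B, ∀ γ ∈ Γ, ∀ φ ∈ Γ,
      gromovProduct (z0 j) (γ j (z0 j)) (φ j (z0 j)) ≤ C →
        gromovProduct (z0 i) (γ i (z0 i)) (φ i (z0 i)) ≤ B := by
    intro i
    by_contra! h
    choose γ hγ φ hφ hCj hi using fun n : ℕ => h n
    refine htr.not_bddAbove_gromovProduct G hX hγ hφ
      (tendsto_atTop_mono (fun n => (hi n).le) tendsto_natCast_atTop_atTop) j ⟨C, ?_⟩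
    rintro _ ⟨n, rfl⟩
    exact hCj n
  choose B hB using hfactor
  obtain ⟨M, hM⟩ := (finite_range B).bddAbove
  exact ⟨M, fun γ hγ φ hφ hC i => (hB i γ hγ φ hφ hC).trans (hM ⟨i, rfl⟩)⟩

end IsTransverse

theorem componentwise_shadows_general
    {r : ℕ} {X : Fin r → Type*} [∀ i, MetricSpace (X i)] [∀ i, ProperSpace (X i)]
    (G : ∀ i, GeodesicStructure (X i)) (hX : ∀ i, (G i).IsCATNegOne)
    (z0 : ∀ i, X i) (Γ : Subgroup (∀ i, X i ≃ᵢ X i))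
    (htr : IsTransverse z0 Γ) (hr : 0 < r)
    (z : ∀ i, X i) (R : ℝ) :
    ∃ R' > 0, ∀ g h : ∀ i, X i ≃ᵢ X i, g ∈ Γ → h ∈ Γ →
      Metric.infDist ((g ⟨0, hr⟩) (z ⟨0, hr⟩))
        ((G ⟨0, hr⟩).seg (z ⟨0, hr⟩) ((h ⟨0, hr⟩) (z ⟨0, hr⟩))) < R →
      ∀ i, Metric.infDist ((g i) (z i)) ((G i).seg (z i) ((h i) (z i))) < R' := by
  set i₁ : Fin r := ⟨0, hr⟩
  obtain ⟨B, hB⟩ := htr.exists_gromovProduct_le G hX i₁ (R + 3 * dist (z i₁) (z0 i₁))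
  obtain ⟨D, hD⟩ := (finite_range fun i => dist (z i) (z0 i)).bddAbove
  refine ⟨|B| + 3 * |D| + 2, by positivity, fun g h hg hh hshadow i => ?_⟩
  have hmove : ∀ i, |gromovProduct (g i (z i)) (z i) (h i (z i))
      - gromovProduct (z0 i) ((g⁻¹) i (z0 i)) ((g⁻¹ * h) i (z0 i))| ≤ 3 * dist (z i) (z0 i) :=
    fun i => abs_gromovProduct_sub_gromovProduct_symm_le (g i) (h i) (z i) (z0 i)
  have h₁ := (G i₁).gromovProduct_le_infDist (g i₁ (z i₁)) (z i₁) (h i₁ (z i₁))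
  have hi := hB g⁻¹ (inv_mem hg) (g⁻¹ * h) (mul_mem (inv_mem hg) hh)
    (by linarith [(abs_le.1 (hmove i₁)).1]) i
  calc infDist (g i (z i)) ((G i).seg (z i) (h i (z i)))
      ≤ gromovProduct (g i (z i)) (z i) (h i (z i)) + 1 := (hX i).infDist_seg_le _ _ _
    _ ≤ B + 3 * D + 1 := by linarith [(abs_le.1 (hmove i)).2, hD ⟨i, rfl⟩]
    _ < |B| + 3 * |D| + 2 := by linarith [le_abs_self B, le_abs_self D]

/-- **Componentwise shadows for transverse subgroups** (Proposition 3.8).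
Let `Z = X₁ × ⋯ × X_r` be a product of proper geodesic CAT(−1) spaces and
`Γ ≤ Isom(Z)` a transverse subgroup.  Let `z = (x₁, …, x_r) ∈ Z`.  For every `R > 0`
there exists `R' = R'(R, z) > 0` such that whenever `g, h ∈ Γ` satisfy
`h₁x₁ ∈ O_R(x₁, g₁x₁)` (in the first factor), one has `hᵢxᵢ ∈ O_{R'}(xᵢ, gᵢxᵢ)` for all
`i`, where `O_R(x,y) = {w : d([x,w], y) < R}` denotes the shadow. -/
theorem componentwise_shadows
    {r : ℕ} {X : Fin r → Type*} [∀ i, MetricSpace (X i)] [∀ i, ProperSpace (X i)]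
    (G : ∀ i, GeodesicStructure (X i)) (hX : ∀ i, (G i).IsCATNegOne)
    (z0 : ∀ i, X i) (Γ : Subgroup (∀ i, X i ≃ᵢ X i))
    (htr : IsTransverse z0 Γ) (hr : 0 < r)
    (z : ∀ i, X i) (R : ℝ) (hR : 0 < R) :
    ∃ R' > 0, ∀ g h : ∀ i, X i ≃ᵢ X i, g ∈ Γ → h ∈ Γ →
      Metric.infDist ((g ⟨0, hr⟩) (z ⟨0, hr⟩))
        ((G ⟨0, hr⟩).seg (z ⟨0, hr⟩) ((h ⟨0, hr⟩) (z ⟨0, hr⟩))) < R →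
      ∀ i, Metric.infDist ((g i) (z i)) ((G i).seg (z i) ((h i) (z i))) < R' :=
  componentwise_shadows_general G hX z0 Γ htr hr z R

end
end
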